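/- arXiv:2104.06562 — 4 statements merged into one kernel-verified Lean document; each statement's English description precedes it below -/
import Mathlib

section
/- Let ψ:(0,∞)→(0,∞) be nonincreasing with ψ(x)→0 as x→∞, and set λ(ψ) = liminf_{x→∞} (−log ψ(x))/log x. Then the Hausdorff dimension of W(ψ) is at most min(4/λ(ψ), 2). -/
open Complex MeasureTheory Filter Set
open scoped ENNReal

noncomputable section

/-- The fundamental domain `𝔇 = {x+iy : x,y ∈ [-1/2,1/2)}`. -/
def fund : Set ℂ := {z : ℂ | z.re ∈ Set.Ico (-(1:ℝ)/2) (1/2) ∧ z.im ∈ Set.Ico (-(1:ℝ)/2) (1/2)}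

/-- `𝔇* = 𝔇 \ {0}`. -/
def fundStar : Set ℂ := fund \ {0}

/-- Nearest Gaussian integer `[z]`, the unique Gaussian integer with `z - [z] ∈ 𝔇`. -/
def nearestGauss (z : ℂ) : ℂ :=
  ((⌊z.re + 1/2⌋ : ℤ) : ℂ) + ((⌊z.im + 1/2⌋ : ℤ) : ℂ) * Complex.I

/-- The Hurwitz map `T(z) = 1/z - [1/z]` (with `T 0 = 0`). -/
def hT (z : ℂ) : ℂ := 1/z - nearestGauss (1/z)

/-- HCF partial quotient `a_{n+1}(z) = [1 / T^n(z)]` (0-based index). -/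
def hA (z : ℂ) (n : ℕ) : ℂ := nearestGauss (1 / (hT^[n] z))

/-- `z` is a Gaussian integer. -/
def IsGaussInt (z : ℂ) : Prop := ∃ a b : ℤ, z = (a : ℂ) + (b : ℂ) * Complex.I

/-- The set `I = {a ∈ ℤ[i] : |a| ≥ √2}` of possible partial quotients. -/
def setI : Set ℂ := {a : ℂ | IsGaussInt a ∧ Real.sqrt 2 ≤ ‖a‖}

/-- The matrix `((p(u), p(u⁻)), (q(u), q(u⁻))) = ((0,1),(1,0)) * ∏ ((u_j,1),(1,0))`. -/
def cfMatrix (u : List ℂ) : Matrix (Fin 2) (Fin 2) ℂ :=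
  !![0, 1; 1, 0] * (u.map fun a => !![a, 1; 1, 0]).prod

/-- Continuant numerator `p(u)`. -/
def contP (u : List ℂ) : ℂ := cfMatrix u 0 0

/-- Continuant denominator `q(u)`. -/
def contQ (u : List ℂ) : ℂ := cfMatrix u 1 0

/-- The cylinder `C(u) = {z ∈ 𝔇 : a_1(z) = u_1, …, a_n(z) = u_n}`. -/
def cylinder (u : List ℂ) : Set ℂ :=
  {z ∈ fund | ∀ j : Fin u.length, hA z j = u.get j}

/-- The prototype set `𝔇_u = T^n(C(u))`. -/
def proto (u : List ℂ) : Set ℂ := hT^[u.length] '' cylinder u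

/-- The Möbius transformation `T_u : z ↦ (p(u⁻) z + p(u)) / (q(u⁻) z + q(u))`. -/
def moebiusT (u : List ℂ) (z : ℂ) : ℂ :=
  (cfMatrix u 0 1 * z + cfMatrix u 0 0) / (cfMatrix u 1 1 * z + cfMatrix u 1 0)

/-- `u` is full if `𝔇_u = 𝔇`. -/
def FullSeq (u : List ℂ) : Prop := proto u = fund

/-- `u` is regular if `𝔇_u` has nonempty interior. -/
def RegularSeq (u : List ℂ) : Prop := (interior (proto u)).Nonempty

/-- The length of the (finite) HCF expansion of a Gaussian rational `w ∈ 𝔇*`: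
the least `N` with `T^N(w) = 0`. -/
def hcfLength (w : ℂ) : ℕ := sInf {N : ℕ | hT^[N] w = 0}

/-- `dd(z, w)`: the number of indices `1 ≤ n ≤ N` where the HCF partial quotients of `z`
and of the Gaussian rational `w` (with expansion of length `N`) differ. -/
def ddiff (z w : ℂ) : ℕ := {n : ℕ | n < hcfLength w ∧ hA z n ≠ hA w n}.ncard

/-- The sequence `v_k = (3, -2i)` followed by `k` repetitions of `(-2, 2i, -2, -2i)`. -/
def vSeq (k : ℕ) : List ℂ :=
  [3, -2*Complex.I] ++ (List.replicate k [-2, 2*Complex.I, -2, -2*Complex.I]).flatten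

/-- The sequence `ṽ_k = (3+i, 2i)` followed by `k` repetitions of `(-2+i, 2i, -2+i, 2i)`. -/
def vtSeq (k : ℕ) : List ℂ :=
  [3+Complex.I, 2*Complex.I] ++
    (List.replicate k [-2+Complex.I, 2*Complex.I, -2+Complex.I, 2*Complex.I]).flatten

/-- The lower order `λ(ψ) = liminf_{x→∞} (-log ψ(x)) / log x`, valued in `ℝ≥0∞`. -/
def lambdaPsi (ψ : ℝ → ℝ) : ℝ≥0∞ :=
  Filter.liminf (fun x : ℝ => ENNReal.ofReal (-Real.log (ψ x) / Real.log x)) Filter.atTop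

/-- The set `E(ψ)` of `z ∈ 𝔇*` admitting infinitely many Gaussian rational approximations
`p/q` with `|z - p/q| ≤ ψ(|q|)` whose HCF expansions differ from that of `z` in more and
more places. -/
def Epsi (ψ : ℝ → ℝ) : Set ℂ :=
  {z : ℂ | z ∈ fundStar ∧ ∃ p q : ℕ → ℂ,
    (∀ n, IsGaussInt (p n) ∧ IsGaussInt (q n) ∧ q n ≠ 0 ∧
      ‖z - p n / q n‖ ≤ ψ ‖q n‖) ∧
    Function.Injective (fun n => p n / q n) ∧
    Filter.Tendsto (fun n => ddiff z (p n / q n)) Filter.atTop Filter.atTop}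

/-- The `ψ`-approximable set `W(ψ)`. -/
def Wpsi (ψ : ℝ → ℝ) : Set ℂ :=
  {z : ℂ | z ∈ fundStar ∧ {pq : ℂ × ℂ | IsGaussInt pq.1 ∧ IsGaussInt pq.2 ∧ pq.2 ≠ 0 ∧
    ‖z - pq.1 / pq.2‖ ≤ ψ ‖pq.2‖}.Infinite}

end

/-!
A point of `W(ψ)` lies in infinitely many discs `B(p/q, ψ(|q|))`. If `d > 4/λ(ψ)`, choose
`t < λ(ψ)` with `t d > 4`; then `ψ(x) ≤ A x^{-t}` on `[1, ∞)`, only numerators with `|p| ≤ C|q|`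
matter, and `∑_{p,q} diam(B)^d ≲ ∑_q |q|^{2 - t d} < ∞`. The Hausdorff–Cantelli lemma (the
Hausdorff-measure analogue of Borel–Cantelli) then gives `μH[d] W(ψ) = 0`, so `dimH W(ψ) ≤ d`.
The bound `2` is the dimension of `ℂ`.
-/

open Topology Metric
open scoped NNReal

theorem hausdorffMeasure_setOf_infinite_mem_eq_zero {X ι : Type*} [EMetricSpace X]
    [MeasurableSpace X] [BorelSpace X] [Countable ι] {d : ℝ} (hd : 0 < d) (B : ι → Set X)
    (hB : ∑' i, ediam (B i) ^ d ≠ ∞) : μH[d] {x | {i | x ∈ B i}.Infinite} = 0 := by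
  set tail : Finset ι → ℝ≥0∞ := fun s => ∑' i : {i // i ∉ s}, ediam (B i) ^ d
  have htail : Tendsto tail atTop (𝓝 0) := ENNReal.tendsto_tsum_compl_atTop_zero hB
  have hrad : Tendsto (fun s => tail s ^ d⁻¹) atTop (𝓝 0) := by
    have := ((ENNReal.continuous_rpow_const (y := d⁻¹)).tendsto 0).comp htail
    rwa [ENNReal.zero_rpow_of_pos (inv_pos.2 hd)] at this
  have hdiam : ∀ s, ∀ i : {i // i ∉ s}, ediam (B i) ≤ tail s ^ d⁻¹ := fun s i => by
    simpa [← ENNReal.rpow_mul, hd.ne'] using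
      ENNReal.rpow_le_rpow (ENNReal.le_tsum (f := fun i : {i // i ∉ s} => ediam (B i) ^ d) i)
        (inv_pos.2 hd).le
  have hcover : ∀ s : Finset ι, {x | {i | x ∈ B i}.Infinite} ⊆ ⋃ i : {i // i ∉ s}, B i :=
    fun s x hx => by
      obtain ⟨i, hxi, hi⟩ := hx.exists_notMem_finset s
      exact mem_iUnion.2 ⟨⟨i, hi⟩, hxi⟩
  refine le_antisymm ?_ bot_le
  calc μH[d] {x | {i | x ∈ B i}.Infinite}
      ≤ liminf tail atTop :=
        Measure.hausdorffMeasure_le_liminf_tsum d _ _ hrad (fun s (i : {i // i ∉ s}) => B i)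
          (.of_forall hdiam) (.of_forall hcover)
    _ = 0 := htail.liminf_eq

theorem ediam_closedBall_le_ofReal {X : Type*} [PseudoMetricSpace X] (c : X) (ρ : ℝ) :
    ediam (closedBall c ρ) ≤ ENNReal.ofReal (2 * ρ) :=
  ediam_le fun x hx y hy => by
    rw [edist_dist]
    exact ENNReal.ofReal_le_ofReal <| by
      linarith [dist_triangle_right x y c, mem_closedBall.1 hx, mem_closedBall.1 hy]

theorem ENNReal.exists_nnreal_lt_and_lt_mul_of_div_lt {a b : ℝ≥0∞} {d : ℝ≥0} (ha₀ : a ≠ 0)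
    (ha : a ≠ ∞) (h : a / b < d) : ∃ t : ℝ≥0, (t : ℝ≥0∞) < b ∧ a < t * d := by
  have hd : (d : ℝ≥0∞) ≠ 0 := by rintro hd; simp [hd] at h
  rw [ENNReal.div_lt_iff (.inr ha₀) (.inr ha), mul_comm] at h
  obtain ⟨t, hat, htb⟩ := ENNReal.lt_iff_exists_nnreal_btwn.1 (ENNReal.div_lt_of_lt_mul h)
  exact ⟨t, htb, (ENNReal.div_lt_iff (.inl hd) (.inl ENNReal.coe_ne_top)).1 hat⟩

theorem eventually_le_rpow_of_lt_lambdaPsi {ψ : ℝ → ℝ} {t : ℝ≥0} (ht : (t : ℝ≥0∞) < lambdaPsi ψ) :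
    ∀ᶠ x in atTop, ψ x ≤ x ^ (-(t : ℝ)) := by
  filter_upwards [eventually_lt_of_lt_liminf ht, eventually_gt_atTop 1] with x hx hx1
  rcases le_or_gt (ψ x) 0 with hψ | hψ
  · exact hψ.trans (by positivity)
  have hlog : 0 < Real.log x := Real.log_pos hx1
  rw [← ENNReal.ofReal_coe_nnreal] at hx
  have key : (t : ℝ) * Real.log x < -Real.log (ψ x) :=
    (lt_div_iff₀ hlog).1 ((ENNReal.ofReal_lt_ofReal_iff_of_nonneg t.2).1 hx)
  rw [← Real.log_le_log_iff hψ (by positivity), Real.log_rpow (by linarith)]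
  linarith

theorem AntitoneOn.exists_le_mul_rpow {ψ : ℝ → ℝ} (hψ : AntitoneOn ψ (Ici 1)) {t : ℝ}
    (ht : 0 ≤ t) (h : ∀ᶠ x in atTop, ψ x ≤ x ^ (-t)) :
    ∃ A, 0 ≤ A ∧ ∀ x, 1 ≤ x → ψ x ≤ A * x ^ (-t) := by
  obtain ⟨x₀, hx₀⟩ := eventually_atTop.1 (h.and (eventually_ge_atTop 1))
  refine ⟨max 1 (|ψ 1| * x₀ ^ t), by positivity, fun x hx => ?_⟩
  have hx0 : 0 < x := by linarith
  have hx₀1 : 1 ≤ x₀ := (hx₀ x₀ le_rfl).2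
  rcases le_total x₀ x with hxx₀ | hxx₀
  · exact (hx₀ x hxx₀).1.trans (le_mul_of_one_le_left (by positivity) (le_max_left _ _))
  calc ψ x ≤ |ψ 1| := (hψ self_mem_Ici hx hx).trans (le_abs_self _)
    _ = |ψ 1| * x₀ ^ t * x₀ ^ (-t) := by
        rw [mul_assoc, ← Real.rpow_add (by linarith), add_neg_cancel,
          Real.rpow_zero, mul_one]
    _ ≤ max 1 (|ψ 1| * x₀ ^ t) * x ^ (-t) := by
        refine mul_le_mul (le_max_right _ _) (Real.rpow_le_rpow_of_nonpos hx0 hxx₀ (by linarith))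
          (Real.rpow_nonneg (by linarith) _) (by positivity)

theorem norm_le_one_of_mem_fund {z : ℂ} (hz : z ∈ fund) : ‖z‖ ≤ 1 := by
  obtain ⟨⟨hre₁, hre₂⟩, him₁, him₂⟩ := hz
  calc ‖z‖ ≤ |z.re| + |z.im| := norm_le_abs_re_add_abs_im z
    _ ≤ 1 / 2 + 1 / 2 := by gcongr <;> exact abs_le.2 ⟨by linarith, by linarith⟩
    _ = 1 := by norm_num

def gaussMk (v : Fin 2 → ℤ) : ℂ := v 0 + v 1 * I

theorem isGaussInt_iff_exists_gaussMk {z : ℂ} : IsGaussInt z ↔ ∃ v, gaussMk v = z :=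
  ⟨fun ⟨a, b, h⟩ => ⟨![a, b], by simp [gaussMk, h]⟩, fun ⟨v, h⟩ => ⟨v 0, v 1, h.symm⟩⟩

theorem norm_le_norm_gaussMk (v : Fin 2 → ℤ) : ‖v‖ ≤ ‖gaussMk v‖ := by
  refine (pi_norm_le_iff_of_nonneg (norm_nonneg _)).2 (Fin.forall_fin_two.2 ⟨?_, ?_⟩)
  · simpa [gaussMk, Int.norm_eq_abs] using abs_re_le_norm (gaussMk v)
  · simpa [gaussMk, Int.norm_eq_abs] using abs_im_le_norm (gaussMk v)

theorem one_le_norm_gaussMk {v : Fin 2 → ℤ} (hv : v ≠ 0) : 1 ≤ ‖gaussMk v‖ := by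
  obtain ⟨i, hi⟩ := Function.ne_iff.1 hv
  calc (1 : ℝ) ≤ ‖v i‖ := by rw [Int.norm_eq_abs]; exact_mod_cast Int.one_le_abs hi
    _ ≤ ‖v‖ := norm_le_pi_norm v i
    _ ≤ ‖gaussMk v‖ := norm_le_norm_gaussMk v

theorem summable_max_one_norm_rpow_neg {r : ℝ} (hr : 2 < r) :
    Summable fun v : Fin 2 → ℤ => max 1 ‖v‖ ^ (-r) := by
  refine (EisensteinSeries.summable_one_div_norm_rpow hr).of_norm_bounded_eventually ?_
  filter_upwards [eventually_cofinite_ne 0] with v hv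
  rw [Real.norm_of_nonneg (by positivity)]
  exact Real.rpow_le_rpow_of_nonpos (norm_pos_iff.2 hv) (le_max_right _ _) (by linarith)

/- Splitting `|q|^{-2r}` between numerator and denominator replaces counting the `O(|q|²)`
numerators `p` by the convergence of `∑_{v ∈ ℤ²} |v|^{-r}` for `r > 2`. -/
theorem norm_gaussMk_rpow_neg_le {p q : Fin 2 → ℤ} (hq : q ≠ 0) {C r : ℝ} (hC : 1 ≤ C)
    (hr : 0 ≤ r) (hpq : ‖gaussMk p‖ ≤ C * ‖gaussMk q‖) :
    ‖gaussMk q‖ ^ (-(2 * r)) ≤ C ^ r * (max 1 ‖p‖ ^ (-r) * max 1 ‖q‖ ^ (-r)) := by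
  set x := ‖gaussMk q‖
  have hx : 1 ≤ x := one_le_norm_gaussMk hq
  have hqx : x ^ (-r) ≤ max 1 ‖q‖ ^ (-r) :=
    Real.rpow_le_rpow_of_nonpos (by positivity) (max_le hx (norm_le_norm_gaussMk q)) (by linarith)
  have hpx : x ^ (-r) ≤ C ^ r * max 1 ‖p‖ ^ (-r) := by
    have hCx : max 1 ‖p‖ ≤ C * x := max_le (by nlinarith) ((norm_le_norm_gaussMk p).trans hpq)
    calc x ^ (-r) = C ^ r * (C * x) ^ (-r) := by
          rw [Real.mul_rpow (by linarith : (0 : ℝ) ≤ C) (by linarith : (0 : ℝ) ≤ x), ← mul_assoc,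
            ← Real.rpow_add (by linarith : (0 : ℝ) < C),
            add_neg_cancel, Real.rpow_zero, one_mul]
      _ ≤ C ^ r * max 1 ‖p‖ ^ (-r) := mul_le_mul_of_nonneg_left
          (Real.rpow_le_rpow_of_nonpos (by positivity) hCx (by linarith)) (by positivity)
  calc x ^ (-(2 * r)) = x ^ (-r) * x ^ (-r) := by
        rw [← Real.rpow_add (by linarith)]; ring_nf
    _ ≤ C ^ r * max 1 ‖p‖ ^ (-r) * max 1 ‖q‖ ^ (-r) :=
        mul_le_mul hpx hqx (by positivity) (by positivity)
    _ = C ^ r * (max 1 ‖p‖ ^ (-r) * max 1 ‖q‖ ^ (-r)) := mul_assoc _ _ _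

/- Once `ψ ≤ C - 1` on `[1, ∞)`, the discarded pairs `|p| > C|q|` give discs missing the unit
disc, which contains `𝔇`; discarding them is what makes the sum of diameters finite. -/
def approxBall (ψ : ℝ → ℝ) (C : ℝ) (pq : (Fin 2 → ℤ) × (Fin 2 → ℤ)) : Set ℂ :=
  if pq.2 ≠ 0 ∧ ‖gaussMk pq.1‖ ≤ C * ‖gaussMk pq.2‖ then
    closedBall (gaussMk pq.1 / gaussMk pq.2) (ψ ‖gaussMk pq.2‖)
  else ∅

theorem Wpsi_subset_setOf_infinite_mem_approxBall {ψ : ℝ → ℝ} {A : ℝ}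
    (hψ : ∀ x, 1 ≤ x → ψ x ≤ A) :
    Wpsi ψ ⊆ {z | {pq | z ∈ approxBall ψ (1 + A) pq}.Infinite} := by
  rintro z ⟨hz, hinf⟩
  refine Infinite.of_image (Prod.map gaussMk gaussMk) (hinf.mono ?_)
  rintro ⟨_, _⟩ ⟨hp, hq, hq0, happ⟩
  obtain ⟨p, rfl⟩ := isGaussInt_iff_exists_gaussMk.1 hp
  obtain ⟨q, rfl⟩ := isGaussInt_iff_exists_gaussMk.1 hq
  have hq0' : q ≠ 0 := by rintro rfl; simp [gaussMk] at hq0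
  have hpq : ‖gaussMk p / gaussMk q‖ ≤ 1 + A :=
    calc ‖gaussMk p / gaussMk q‖ ≤ ‖z‖ + ‖z - gaussMk p / gaussMk q‖ := norm_le_insert _ _
      _ ≤ 1 + A := add_le_add (norm_le_one_of_mem_fund hz.1)
          (happ.trans (hψ _ (one_le_norm_gaussMk hq0')))
  rw [norm_div, div_le_iff₀ (by positivity)] at hpq
  refine ⟨(p, q), ?_, rfl⟩
  simp only [mem_ofPred_eq, approxBall, if_pos (And.intro hq0' hpq)]
  exact mem_closedBall.2 (by rwa [dist_eq])

theorem ediam_approxBall_rpow_le {ψ : ℝ → ℝ} {A t d C : ℝ}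
    (hψ : ∀ x, 1 ≤ x → ψ x ≤ A * x ^ (-t)) (hA : 0 ≤ A) (ht : 0 ≤ t) (hd : 0 < d) (hC : 1 ≤ C)
    (pq : (Fin 2 → ℤ) × (Fin 2 → ℤ)) :
    ediam (approxBall ψ C pq) ^ d ≤ ENNReal.ofReal ((2 * A) ^ d * C ^ (t * d / 2)) *
      (ENNReal.ofReal (max 1 ‖pq.1‖ ^ (-(t * d / 2))) *
        ENNReal.ofReal (max 1 ‖pq.2‖ ^ (-(t * d / 2)))) := by
  obtain ⟨p, q⟩ := pq
  unfold approxBall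
  split_ifs with h
  · obtain ⟨hq, hpq⟩ := h
    set x := ‖gaussMk q‖
    have hx : 1 ≤ x := one_le_norm_gaussMk hq
    rw [← ENNReal.ofReal_mul (by positivity), ← ENNReal.ofReal_mul (by positivity)]
    calc ediam (closedBall (gaussMk p / gaussMk q) (ψ x)) ^ d
        ≤ ENNReal.ofReal (2 * (A * x ^ (-t))) ^ d := by
          refine ENNReal.rpow_le_rpow ((ediam_closedBall_le_ofReal _ _).trans ?_) hd.le
          exact ENNReal.ofReal_le_ofReal (by linarith [hψ x hx])
      _ = ENNReal.ofReal ((2 * A) ^ d * x ^ (-(2 * (t * d / 2)))) := by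
          rw [ENNReal.ofReal_rpow_of_nonneg (by positivity) hd.le, ← mul_assoc,
            Real.mul_rpow (by positivity) (by positivity), ← Real.rpow_mul (by positivity)]
          ring_nf
      _ ≤ _ := by
          rw [mul_assoc]
          exact ENNReal.ofReal_le_ofReal <| mul_le_mul_of_nonneg_left
            (norm_gaussMk_rpow_neg_le hq hC (by positivity) hpq) (by positivity)
  · simp [ENNReal.zero_rpow_of_pos hd]

theorem hausdorffMeasure_Wpsi_eq_zero_of_le_mul_rpow {ψ : ℝ → ℝ} {A t d : ℝ} (hA : 0 ≤ A)
    (hψ : ∀ x, 1 ≤ x → ψ x ≤ A * x ^ (-t)) (hd : 0 < d) (htd : 4 < t * d) :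
    μH[d] (Wpsi ψ) = 0 := by
  have ht : 0 < t := by
    by_contra! h
    nlinarith
  have hψA : ∀ x, 1 ≤ x → ψ x ≤ A := fun x hx => (hψ x hx).trans <|
    mul_le_of_le_one_right hA (Real.rpow_le_one_of_one_le_of_nonpos hx (by linarith))
  refine measure_mono_null (Wpsi_subset_setOf_infinite_mem_approxBall hψA)
    (hausdorffMeasure_setOf_infinite_mem_eq_zero hd _ ?_)
  set w : (Fin 2 → ℤ) → ℝ≥0∞ := fun v => ENNReal.ofReal (max 1 ‖v‖ ^ (-(t * d / 2)))
  have hw : ∑' v, w v ≠ ∞ := by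
    rw [← ENNReal.ofReal_tsum_of_nonneg (fun _ => by positivity)
      (summable_max_one_norm_rpow_neg (by linarith))]
    exact ENNReal.ofReal_ne_top
  refine ne_top_of_le_ne_top ?_ (ENNReal.tsum_le_tsum
    (ediam_approxBall_rpow_le hψ hA ht.le hd (by linarith)))
  rw [ENNReal.tsum_mul_left, ENNReal.tsum_prod']
  simp_rw [ENNReal.tsum_mul_left, ENNReal.tsum_mul_right]
  exact ENNReal.mul_ne_top ENNReal.ofReal_ne_top (ENNReal.mul_ne_top hw hw)

theorem hausdorff_dimension_Wpsi_upper_general (ψ : ℝ → ℝ)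
    (hmono : ∀ x y : ℝ, 0 < x → x ≤ y → ψ y ≤ ψ x) :
    dimH (Wpsi ψ) ≤ min (4 / lambdaPsi ψ) 2 := by
  refine le_min (dimH_le fun d hd => le_of_not_gt fun hlt => ?_) ?_
  · obtain ⟨t, htlam, htd⟩ :=
      ENNReal.exists_nnreal_lt_and_lt_mul_of_div_lt (by norm_num) (by norm_num) hlt
    have htd' : (4 : ℝ) < t * d := by exact_mod_cast htd
    have hanti : AntitoneOn ψ (Ici 1) := fun x hx y _ hxy =>
      hmono x y (by linarith [mem_Ici.1 hx]) hxy
    obtain ⟨A, hA, hψ⟩ := hanti.exists_le_mul_rpow t.2 (eventually_le_rpow_of_lt_lambdaPsi htlam)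
    have hd0 : (0 : ℝ) < d := pos_of_mul_pos_right (by linarith : (0 : ℝ) < t * d) t.2
    simp [hausdorffMeasure_Wpsi_eq_zero_of_le_mul_rpow hA hψ hd0 htd'] at hd
  · calc dimH (Wpsi ψ) ≤ dimH (univ : Set ℂ) := dimH_mono (subset_univ _)
      _ = 2 := by rw [Real.dimH_univ_eq_finrank, Complex.finrank_real_complex]; rfl

theorem hausdorff_dimension_Wpsi_upper (ψ : ℝ → ℝ)
    (hpos : ∀ x : ℝ, 0 < x → 0 < ψ x)
    (hmono : ∀ x y : ℝ, 0 < x → x ≤ y → ψ y ≤ ψ x)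
    (hlim : Filter.Tendsto ψ Filter.atTop (nhds 0)) :
    dimH (Wpsi ψ) ≤ min (4 / lambdaPsi ψ) 2 :=
  hausdorff_dimension_Wpsi_upper_general ψ hmono
end

section
/- Let x ∈ (0,1) be irrational and let p, q ∈ ℕ with |x − p/q| < 1/q². Let (a_n)_{n≥1} be the regular continued fraction partial quotients of x and (b_1,…,b_N) the regular continued fraction partial quotients of p/q (produced by the Gauss-map algorithm, so in particular b_N ≥ 2). Then a_k = b_k for all 1 ≤ k ≤ N−1. -/
open Complex MeasureTheory Filter Set
open scoped ENNReal

noncomputable section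

/-- The Gauss map `G(x) = 1/x - ⌊1/x⌋` (with `G 0 = 0`). -/
def gaussMap (x : ℝ) : ℝ := Int.fract (1/x)

/-- RCF partial quotient `a_{n+1}(x) = ⌊1 / G^n(x)⌋` (0-based index). -/
def rcfA (x : ℝ) (n : ℕ) : ℤ := ⌊1 / (gaussMap^[n] x)⌋

end


/-!
Write `p/q = [0; b₁, …, b_{N-1} + t]` with `t = G^{N-1}(p/q)`; then `0 < t ≤ 1/2` because
`b_N ≥ 2`. As a function of the tail, `[0; b₁, …, b_{N-1} + s] = (A s + B) / (C s + D)` with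
nonnegative integers `A, B, C, D` and `AD - BC = ±1`, and every such value with `0 < s < 1` has
partial quotients `b₁, …, b_{N-1}`. These values form the open interval where `D x - B` and
`(C + D) x - (A + B)` have opposite signs. At `x = p/q` the two forms are `±t / (C t + D)` and
`∓(1 - t) / (C t + D)`, and `t / (C t + D) ≥ 1/q` because `D p - B q` is a nonzero integer; this
margin keeps both signs for every `x` with `|x - p/q| < 1/q²`.
-/

theorem moebius_sub_endpoints {A B C D t y : ℝ} (hδ : C * t + D ≠ 0)
    (hy : y = (A * t + B) / (C * t + D)) :
    D * y - B = (A * D - B * C) * t / (C * t + D) ∧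
      (C + D) * y - (A + B) = (A * D - B * C) * (t - 1) / (C * t + D) := by
  subst hy
  constructor <;> rw [eq_div_iff hδ, sub_mul, mul_assoc, div_mul_cancel₀ _ hδ] <;> ring

theorem one_div_le_abs_mul_div_sub {p q B D : ℤ} (hq : 0 < q) (hne : (D : ℝ) * (p / q) ≠ B) :
    1 / (q : ℝ) ≤ |(D : ℝ) * (p / q) - B| := by
  have hqR : (0 : ℝ) < q := by exact_mod_cast hq
  have hform : (D : ℝ) * (p / q) - B = ((D * p - B * q : ℤ) : ℝ) / q := by
    push_cast; field_simp
  have hnum : D * p - B * q ≠ 0 := by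
    rintro h; rw [h, Int.cast_zero, zero_div, sub_eq_zero] at hform; exact hne hform
  rw [hform, abs_div, abs_of_pos hqR]
  gcongr
  exact_mod_cast Int.one_le_abs hnum

theorem exists_mem_Ioo_eq_moebius_of_mul_neg {A B C D x : ℝ} (hdet : A * D - B * C ≠ 0)
    (hx : (D * x - B) * ((C + D) * x - (A + B)) < 0) :
    ∃ s ∈ Ioo (0 : ℝ) 1, x = (A * s + B) / (C * s + D) := by
  set α := D * x - B
  set β := (C + D) * x - (A + B)
  have hs : α / (α - β) ∈ Ioo (0 : ℝ) 1 := by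
    rcases lt_or_gt_of_ne (left_ne_zero_of_mul hx.ne) with hα | hα
    · have hβ : 0 < β := pos_of_mul_neg_right hx hα.le
      exact ⟨div_pos_of_neg_of_neg hα (by linarith),
        (div_lt_one_of_neg (by linarith)).2 (by linarith)⟩
    · have hβ : β < 0 := neg_of_mul_neg_right hx hα.le
      exact ⟨div_pos hα (by linarith), (div_lt_one (by linarith)).2 (by linarith)⟩
  have hαβ : α - β ≠ 0 := fun h => by simp [h] at hs
  refine ⟨α / (α - β), hs, ?_⟩
  have hden : C * (α / (α - β)) + D = (A * D - B * C) / (α - β) := by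
    field_simp; ring
  rw [hden, eq_div_iff (div_ne_zero hdet hαβ)]
  field_simp
  ring

theorem endpoint_forms_mul_neg_of_mul_abs_sub_lt {A B C D t x y : ℝ}
    (hdet : |A * D - B * C| = 1) (hC : 0 ≤ C) (hD : 0 ≤ D) (ht : t ≤ 1 / 2)
    (hδ : 0 < C * t + D) (hy : y = (A * t + B) / (C * t + D))
    (hclose : (C + D) * |x - y| < t / (C * t + D)) :
    (D * x - B) * ((C + D) * x - (A + B)) < 0 := by
  set ε := A * D - B * C
  set δ := C * t + D
  have hε2 : ε ^ 2 = 1 := by rw [← sq_abs, hdet, one_pow]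
  obtain ⟨hy₁, hy₂⟩ := moebius_sub_endpoints hδ.ne' hy
  obtain ⟨hlo, hhi⟩ : -|x - y| ≤ ε * (x - y) ∧ ε * (x - y) ≤ |x - y| :=
    abs_le.mp (by rw [abs_mul, hdet, one_mul])
  have hC_abs : 0 ≤ C * |x - y| := mul_nonneg hC (abs_nonneg _)
  have hleft : 0 < ε * (D * x - B) := by
    have e : ε * (D * x - B) = t / δ + D * (ε * (x - y)) := by
      linear_combination ε * hy₁ + t / δ * hε2
    linarith [mul_le_mul_of_nonneg_left hlo hD]
  have hright : ε * ((C + D) * x - (A + B)) < 0 := by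
    have e : ε * ((C + D) * x - (A + B)) = (t - 1) / δ + (C + D) * (ε * (x - y)) := by
      linear_combination ε * hy₂ + (t - 1) / δ * hε2
    have : (t - 1) / δ ≤ -(t / δ) := by
      rw [← neg_div, div_le_div_iff_of_pos_right hδ]
      linarith
    linarith [mul_le_mul_of_nonneg_left hhi (by linarith : (0 : ℝ) ≤ C + D)]
  calc (D * x - B) * ((C + D) * x - (A + B))
      = ε * (D * x - B) * (ε * ((C + D) * x - (A + B))) := by
        linear_combination -(D * x - B) * ((C + D) * x - (A + B)) * hε2
    _ < 0 := mul_neg_of_pos_of_neg hleft hright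

theorem exists_mem_Ioo_eq_moebius_of_abs_sub_lt {A B C D p q : ℤ} {t x : ℝ}
    (hdet : |A * D - B * C| = 1) (hC : 0 ≤ C) (hD : 0 < D) (hq : 0 < q)
    (ht : t ∈ Ioc (0 : ℝ) (1 / 2)) (hy : (p : ℝ) / q = (A * t + B) / (C * t + D))
    (happ : |x - p / q| < 1 / (q : ℝ) ^ 2) :
    ∃ s ∈ Ioo (0 : ℝ) 1, x = (A * s + B) / (C * s + D) := by
  have hε : |(A : ℝ) * D - B * C| = 1 := by exact_mod_cast hdet
  have hC' : (0 : ℝ) ≤ C := by exact_mod_cast hC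
  have hD' : (0 : ℝ) < D := by exact_mod_cast hD
  have hδ : (0 : ℝ) < C * t + D := add_pos_of_nonneg_of_pos (mul_nonneg hC' ht.1.le) hD'
  set δ : ℝ := C * t + D
  have hgap : |D * (p / q : ℝ) - B| = t / δ := by
    rw [(moebius_sub_endpoints hδ.ne' hy).1, abs_div, abs_mul, hε, one_mul, abs_of_pos ht.1,
      abs_of_pos hδ]
  have hgap_pos : 0 < t / δ := div_pos ht.1 hδ
  have hq_le : 1 / (q : ℝ) ≤ t / δ :=
    hgap ▸ one_div_le_abs_mul_div_sub hq fun h => by rw [h, sub_self, abs_zero] at hgap; linarith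
  have hclose : (C + D) * |x - p / q| < t / δ :=
    calc (C + D) * |x - p / q| < (C + D) * (1 / (q : ℝ)) ^ 2 := by
          rw [one_div_pow]; gcongr
      _ ≤ (C + D) * (t / δ) ^ 2 := by gcongr
      _ = (C + D) * t / δ * (t / δ) := by ring
      _ ≤ 1 * (t / δ) := by
          gcongr
          rw [div_le_one hδ]
          nlinarith [ht.2]
      _ = t / δ := one_mul _
  have hdet_ne : (A : ℝ) * D - B * C ≠ 0 := fun h => by
    rw [h, abs_zero] at hε; exact zero_ne_one hε
  exact exists_mem_Ioo_eq_moebius_of_mul_neg hdet_ne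
    (endpoint_forms_mul_neg_of_mul_abs_sub_lt hε hC' hD'.le ht.2 hδ hy hclose)

theorem rcfA_succ (y : ℝ) (k : ℕ) : rcfA y (k + 1) = rcfA (gaussMap y) k := by
  rw [rcfA, rcfA, Function.iterate_succ_apply]

theorem eq_one_div_rcfA_zero_add_gaussMap (y : ℝ) : y = 1 / (rcfA y 0 + gaussMap y) := by
  rw [rcfA, gaussMap, Function.iterate_zero_apply, Int.floor_add_fract, one_div_one_div]

theorem rcfA_one_div_intCast_add_zero {b : ℤ} {c : ℝ} (hc : c ∈ Ico (0 : ℝ) 1) :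
    rcfA (1 / (b + c)) 0 = b := by
  rw [rcfA, Function.iterate_zero_apply, one_div_one_div, Int.floor_intCast_add,
    Int.floor_eq_zero_iff.2 hc, add_zero]

theorem gaussMap_one_div_intCast_add {b : ℤ} {c : ℝ} (hc : c ∈ Ico (0 : ℝ) 1) :
    gaussMap (1 / (b + c)) = c := by
  rw [gaussMap, one_div_one_div, Int.fract_intCast_add, Int.fract_eq_self.2 hc]

theorem gaussMap_iterate_mem_Ico {y : ℝ} (hy : y ∈ Ico (0 : ℝ) 1) (n : ℕ) :
    gaussMap^[n] y ∈ Ico (0 : ℝ) 1 := by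
  cases n with
  | zero => exact hy
  | succ n =>
    rw [Function.iterate_succ_apply']
    exact ⟨Int.fract_nonneg _, Int.fract_lt_one _⟩

theorem one_le_floor_one_div {u : ℝ} (hu : u ∈ Ioo (0 : ℝ) 1) : 1 ≤ ⌊1 / u⌋ := by
  rw [Int.le_floor, Int.cast_one]
  exact one_le_one_div hu.1 hu.2.le

theorem mem_Ioc_of_two_le_floor_one_div {t : ℝ} (h : 2 ≤ ⌊1 / t⌋) :
    t ∈ Ioc (0 : ℝ) (1 / 2) := by
  have h2 : (2 : ℝ) ≤ 1 / t := by exact_mod_cast Int.le_floor.1 h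
  have ht : 0 < t := one_div_pos.1 (by linarith)
  exact ⟨ht, (le_one_div two_pos ht).1 h2⟩

/-- `cfWithTail [b₁, …, bₘ] s = [0; b₁, …, bₘ + s]`. -/
noncomputable def cfWithTail : List ℤ → ℝ → ℝ
  | [], s => s
  | b :: l, s => 1 / (b + cfWithTail l s)

theorem cfWithTail_mem_Ioo {l : List ℤ} (hl : ∀ b ∈ l, 0 < b) {s : ℝ}
    (hs : s ∈ Ioo (0 : ℝ) 1) : cfWithTail l s ∈ Ioo (0 : ℝ) 1 := by
  induction l with
  | nil => exact hs
  | cons b l ih =>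
    have hb : (1 : ℝ) ≤ b := by exact_mod_cast hl b List.mem_cons_self
    obtain ⟨hc₀, -⟩ := ih fun c hc => hl c (List.mem_cons_of_mem b hc)
    have hpos : (0 : ℝ) < b + cfWithTail l s := by linarith
    rw [cfWithTail]
    exact ⟨one_div_pos.2 hpos, (div_lt_one hpos).2 (by linarith)⟩

theorem rcfA_cfWithTail {l : List ℤ} (hl : ∀ b ∈ l, 0 < b) {s : ℝ}
    (hs : s ∈ Ioo (0 : ℝ) 1) {k : ℕ} (hk : k < l.length) :
    rcfA (cfWithTail l s) k = l[k] := by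
  induction l generalizing k with
  | nil => exact absurd hk (Nat.not_lt_zero k)
  | cons b l ih =>
    have hl' : ∀ c ∈ l, 0 < c := fun c hc => hl c (List.mem_cons_of_mem b hc)
    have hc := Ioo_subset_Ico_self (cfWithTail_mem_Ioo hl' hs)
    rw [cfWithTail]
    cases k with
    | zero => exact rcfA_one_div_intCast_add_zero hc
    | succ k =>
      rw [rcfA_succ, gaussMap_one_div_intCast_add hc]
      exact ih hl' (Nat.lt_of_succ_lt_succ hk)

theorem eq_cfWithTail_rcfA (y : ℝ) (m : ℕ) :
    y = cfWithTail (List.ofFn fun j : Fin m => rcfA y j) (gaussMap^[m] y) := by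
  induction m generalizing y with
  | zero => rfl
  | succ m ih =>
    simp only [List.ofFn_succ, Fin.val_zero, Fin.val_succ, rcfA_succ, cfWithTail,
      Function.iterate_succ_apply]
    rw [← ih]
    exact eq_one_div_rcfA_zero_add_gaussMap y

theorem exists_cfWithTail_eq_moebius {l : List ℤ} (hl : ∀ b ∈ l, 0 < b) :
    ∃ A B C D : ℤ, 0 ≤ A ∧ 0 ≤ B ∧ 0 ≤ C ∧ 0 < D ∧ |A * D - B * C| = 1 ∧
      ∀ s : ℝ, 0 ≤ s → cfWithTail l s = (A * s + B) / (C * s + D) := by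
  induction l with
  | nil => exact ⟨1, 0, 0, 1, by simp [cfWithTail]⟩
  | cons b l ih =>
    have hb : 0 < b := hl b List.mem_cons_self
    obtain ⟨A, B, C, D, hA, hB, hC, hD, hdet, heq⟩ :=
      ih fun c hc => hl c (List.mem_cons_of_mem b hc)
    refine ⟨C, D, A + b * C, B + b * D, hC, hD.le, by positivity, by positivity, ?_, ?_⟩
    · rw [show C * (B + b * D) - D * (A + b * C) = -(A * D - B * C) by ring, abs_neg, hdet]
    · intro s hs
      have hden : (0 : ℝ) < C * s + D :=
        add_pos_of_nonneg_of_pos (mul_nonneg (Int.cast_nonneg hC) hs) (Int.cast_pos.2 hD)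
      have hden' : (0 : ℝ) < (A + b * C : ℤ) * s + (B + b * D : ℤ) :=
        add_pos_of_nonneg_of_pos (mul_nonneg (Int.cast_nonneg (by positivity)) hs)
          (Int.cast_pos.2 (by positivity))
      rw [cfWithTail, heq s hs, eq_div_iff hden'.ne']
      field_simp
      push_cast
      ring

theorem rcf_prefix_of_good_approx_general (x : ℝ)
    (p q : ℕ) (hq : 0 < q) (happ : |x - (p:ℝ)/q| < 1/(q:ℝ)^2)
    (hpq : (p:ℝ)/q ∈ Set.Ioo (0:ℝ) 1) (N : ℕ)
    (hmin : ∀ m, m < N → gaussMap^[m] ((p:ℝ)/q) ≠ 0)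
    (hlast : 2 ≤ rcfA ((p:ℝ)/q) (N-1)) :
    ∀ k, k + 1 < N → rcfA x k = rcfA ((p:ℝ)/q) k := by
  intro k hk
  set y : ℝ := p / q
  set l := List.ofFn fun j : Fin (N - 1) => rcfA y j
  have hl : ∀ b ∈ l, 0 < b := by
    simp only [l, List.mem_ofFn]
    rintro _ ⟨j, rfl⟩
    have hj := gaussMap_iterate_mem_Ico (Ioo_subset_Ico_self hpq) j
    exact one_le_floor_one_div ⟨hj.1.lt_of_ne (hmin j (by omega)).symm, hj.2⟩
  set t := gaussMap^[N - 1] y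
  have ht : t ∈ Ioc (0 : ℝ) (1 / 2) := mem_Ioc_of_two_le_floor_one_div hlast
  obtain ⟨A, B, C, D, -, -, hC, hD, hdet, hl_eq⟩ := exists_cfWithTail_eq_moebius hl
  have hy : ((p : ℤ) : ℝ) / (q : ℤ) = (A * t + B) / (C * t + D) := by
    rw [Int.cast_natCast, Int.cast_natCast, ← hl_eq t ht.1.le]
    exact eq_cfWithTail_rcfA y (N - 1)
  obtain ⟨s, hs, rfl⟩ := exists_mem_Ioo_eq_moebius_of_abs_sub_lt hdet hC hD
    (Int.natCast_pos.2 hq) ht hy (x := x) (by simpa only [Int.cast_natCast] using happ)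
  have hkl : k < l.length := by simp only [l, List.length_ofFn]; omega
  rw [← hl_eq s hs.1.le, rcfA_cfWithTail hl hs hkl, List.getElem_ofFn]

theorem rcf_prefix_of_good_approx (x : ℝ) (hx : x ∈ Set.Ioo (0:ℝ) 1) (hirr : Irrational x)
    (p q : ℕ) (hq : 0 < q) (happ : |x - (p:ℝ)/q| < 1/(q:ℝ)^2)
    (hpq : (p:ℝ)/q ∈ Set.Ioo (0:ℝ) 1) (N : ℕ) (hN : 1 ≤ N)
    (hterm : gaussMap^[N] ((p:ℝ)/q) = 0)
    (hmin : ∀ m, m < N → gaussMap^[m] ((p:ℝ)/q) ≠ 0)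
    (hlast : 2 ≤ rcfA ((p:ℝ)/q) (N-1)) :
    ∀ k, k + 1 < N → rcfA x k = rcfA ((p:ℝ)/q) k :=
  rcf_prefix_of_good_approx_general x p q hq happ hpq N hmin hlast
end

section
/- Let a ∈ Iⁿ be a full sequence and let b ∈ ℤ[i] with |b| ≥ 2√2 and Im b ≥ 1. Then for every k ≥ 0 the cylinder C(a v_k b) is full and its closure is contained in the interior of C(a), where a v_k b denotes the concatenation of a, v_k and (b). -/
open Complex MeasureTheory Filter Set
open scoped ENNReal

/-!
A point `w` lies in the prototype set `𝔇_u` exactly when all the partial compositions of the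
inverse branches `t ↦ 1/(a + t)`, applied to `w` in the order `u_n, …, u_1`, stay in `𝔇`; the
cylinder `C(u)` is the image of `𝔇_u` under the full composition. Hence full sequences
concatenate, and the composition for a full `a` is continuous and open on `𝔇`.

For `v_k b`, the point `1/(b + w)` with `w ∈ 𝔇` falls into a region `R₀`: a disk around `0`
with the disk `|x - i| ≤ 1` removed. The block `(-2, 2i, -2, -2i)` maps `R₀` into itself through
three intermediate regions, each a disk cut by a line `Im = ±1/2` or by a circle `|x ± i| = 1`
(inversion exchanges the two kinds of boundary). The final digits `(3, -2i)` send `R₀` into a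
small closed disk well inside `𝔇`, so `C(a v_k b)` lies in the image of a compact subset of the
interior of `𝔇` under the continuous open map attached to `a`.
-/

open ComplexConjugate

namespace HurwitzCF

lemma mem_fund_iff {z : ℂ} :
    z ∈ fund ↔ (-(1:ℝ)/2 ≤ z.re ∧ z.re < 1/2) ∧ (-(1:ℝ)/2 ≤ z.im ∧ z.im < 1/2) := by
  simp [fund, Set.mem_Ico]

lemma nearestGauss_eq_zero {z : ℂ} (hz : z ∈ fund) : nearestGauss z = 0 := by
  rw [mem_fund_iff] at hz
  have hre : ⌊z.re + 2⁻¹⌋ = 0 := Int.floor_eq_zero_iff.2 ⟨by linarith, by linarith⟩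
  have him : ⌊z.im + 2⁻¹⌋ = 0 := Int.floor_eq_zero_iff.2 ⟨by linarith, by linarith⟩
  simp [nearestGauss, hre, him]

lemma nearestGauss_add {g : ℂ} (hg : IsGaussInt g) (z : ℂ) :
    nearestGauss (g + z) = g + nearestGauss z := by
  obtain ⟨m, n, rfl⟩ := hg
  have hshift (k : ℤ) (x : ℝ) : ⌊k + x + 2⁻¹⌋ = k + ⌊x + 2⁻¹⌋ := by
    rw [add_assoc, Int.floor_intCast_add]
  apply Complex.ext <;> simp [nearestGauss, hshift]

lemma sub_nearestGauss_mem_fund (z : ℂ) : z - nearestGauss z ∈ fund := by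
  rw [mem_fund_iff]
  simp only [nearestGauss, sub_re, sub_im, add_re, add_im, mul_re, mul_im, intCast_re,
    intCast_im, I_re, I_im]
  have := Int.floor_le (z.re + 1/2)
  have := Int.lt_floor_add_one (z.re + 1/2)
  have := Int.floor_le (z.im + 1/2)
  have := Int.lt_floor_add_one (z.im + 1/2)
  refine ⟨⟨?_, ?_⟩, ?_, ?_⟩ <;> linarith

lemma hT_mem_fund (z : ℂ) : hT z ∈ fund := sub_nearestGauss_mem_fund (1 / z)

-- Also at `z = 0`, since `1 / 0 = 0⁻¹ = 0`.
lemma inv_nearestGauss_add_hT (z : ℂ) : (nearestGauss (1 / z) + hT z)⁻¹ = z := by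
  simp [hT]

lemma nearestGauss_add_of_mem_fund {a t : ℂ} (ha : IsGaussInt a) (ht : t ∈ fund) :
    nearestGauss (a + t) = a := by
  rw [nearestGauss_add ha, nearestGauss_eq_zero ht, add_zero]

lemma hT_inv_add {a t : ℂ} (ha : IsGaussInt a) (ht : t ∈ fund) : hT (a + t)⁻¹ = t := by
  simp [hT, nearestGauss_add_of_mem_fund ha ht]

lemma add_ne_zero_of_mem_fund {a t : ℂ} (ha : IsGaussInt a) (ha0 : a ≠ 0) (ht : t ∈ fund) :
    a + t ≠ 0 := by
  intro h
  have := nearestGauss_add_of_mem_fund ha ht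
  rw [h, nearestGauss_eq_zero (by norm_num [mem_fund_iff])] at this
  exact ha0 this.symm

lemma mem_cylinder_nil {z : ℂ} : z ∈ cylinder [] ↔ z ∈ fund :=
  ⟨And.left, fun h => ⟨h, fun j => j.elim0⟩⟩

lemma mem_cylinder_cons {a z : ℂ} {u : List ℂ} :
    z ∈ cylinder (a :: u) ↔ z ∈ fund ∧ nearestGauss (1 / z) = a ∧ hT z ∈ cylinder u := by
  simp only [_root_.cylinder, Set.mem_ofPred_eq, Fin.forall_fin_succ, List.length_cons, hA,
    Fin.val_zero, Function.iterate_zero, id, List.get_eq_getElem, List.getElem_cons_zero,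
    Fin.val_succ, Function.iterate_succ_apply, List.getElem_cons_succ, hT_mem_fund, true_and]

/-- The composition `w ↦ 1/(u₁ + 1/(u₂ + ⋯ + 1/(uₙ + w)))` of the inverse branches of `hT`. -/
noncomputable def cfComp (u : List ℂ) (w : ℂ) : ℂ := u.foldr (fun a t => (a + t)⁻¹) w

@[simp] lemma cfComp_nil (w : ℂ) : cfComp [] w = w := rfl

@[simp] lemma cfComp_cons (a : ℂ) (u : List ℂ) (w : ℂ) :
    cfComp (a :: u) w = (a + cfComp u w)⁻¹ := rfl

lemma cfComp_append (u v : List ℂ) (w : ℂ) : cfComp (u ++ v) w = cfComp u (cfComp v w) :=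
  List.foldr_append

def Admissible : List ℂ → ℂ → Prop
  | [], w => w ∈ fund
  | a :: u, w => (a + cfComp u w)⁻¹ ∈ fund ∧ Admissible u w

@[simp] lemma admissible_nil {w : ℂ} : Admissible [] w ↔ w ∈ fund := Iff.rfl

@[simp] lemma admissible_cons {a w : ℂ} {u : List ℂ} :
    Admissible (a :: u) w ↔ (a + cfComp u w)⁻¹ ∈ fund ∧ Admissible u w := Iff.rfl

lemma Admissible.cfComp_mem_fund {u : List ℂ} {w : ℂ} (h : Admissible u w) :
    cfComp u w ∈ fund := by
  cases u with
  | nil => exact h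
  | cons a u => exact h.1

lemma Admissible.mem_fund {u : List ℂ} {w : ℂ} (h : Admissible u w) : w ∈ fund := by
  induction u with
  | nil => exact h
  | cons a u ih => exact ih h.2

lemma admissible_append {u v : List ℂ} {w : ℂ} :
    Admissible (u ++ v) w ↔ Admissible u (cfComp v w) ∧ Admissible v w := by
  induction u with
  | nil => exact ⟨fun h => ⟨h.cfComp_mem_fund, h⟩, And.right⟩
  | cons a u ih => simp only [List.cons_append, admissible_cons, ih, cfComp_append]; tauto

lemma Admissible.cfComp_mem_cylinder {u : List ℂ} (hu : ∀ a ∈ u, IsGaussInt a) {w : ℂ}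
    (h : Admissible u w) : cfComp u w ∈ cylinder u ∧ hT^[u.length] (cfComp u w) = w := by
  induction u with
  | nil => exact ⟨mem_cylinder_nil.2 h, rfl⟩
  | cons a u ih =>
    obtain ⟨hmem, hiter⟩ := ih (fun x hx => hu x (List.mem_cons_of_mem a hx)) h.2
    have ha := hu a List.mem_cons_self
    have hT_eq := hT_inv_add ha h.2.cfComp_mem_fund
    refine ⟨mem_cylinder_cons.2 ⟨h.1, ?_, by rwa [cfComp_cons, hT_eq]⟩, ?_⟩
    · rw [cfComp_cons, one_div, inv_inv, nearestGauss_add_of_mem_fund ha h.2.cfComp_mem_fund]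
    · rw [List.length_cons, Function.iterate_succ_apply, cfComp_cons, hT_eq, hiter]

lemma admissible_of_mem_cylinder {u : List ℂ} {z : ℂ} (hz : z ∈ cylinder u) :
    Admissible u (hT^[u.length] z) ∧ cfComp u (hT^[u.length] z) = z := by
  induction u generalizing z with
  | nil => exact ⟨mem_cylinder_nil.1 hz, rfl⟩
  | cons a u ih =>
    obtain ⟨hz, ha, hTz⟩ := mem_cylinder_cons.1 hz
    obtain ⟨hadm, hcomp⟩ := ih hTz
    have hz_eq : (a + cfComp u (hT^[u.length] (hT z)))⁻¹ = z := by
      rw [hcomp, ← ha, inv_nearestGauss_add_hT]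
    rw [List.length_cons, Function.iterate_succ_apply, cfComp_cons, hz_eq]
    exact ⟨⟨by rwa [hz_eq], hadm⟩, rfl⟩

lemma proto_eq {u : List ℂ} (hu : ∀ a ∈ u, IsGaussInt a) :
    proto u = {w | Admissible u w} := by
  ext w
  constructor
  · rintro ⟨z, hz, rfl⟩
    exact (admissible_of_mem_cylinder hz).1
  · intro hw
    obtain ⟨hmem, hiter⟩ := hw.cfComp_mem_cylinder hu
    exact ⟨_, hmem, hiter⟩

lemma cylinder_eq_image {u : List ℂ} (hu : ∀ a ∈ u, IsGaussInt a) :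
    cylinder u = cfComp u '' {w | Admissible u w} := by
  ext z
  constructor
  · intro hz
    obtain ⟨hadm, hcomp⟩ := admissible_of_mem_cylinder hz
    exact ⟨_, hadm, hcomp⟩
  · rintro ⟨w, hw, rfl⟩
    exact (hw.cfComp_mem_cylinder hu).1

lemma fullSeq_iff {u : List ℂ} (hu : ∀ a ∈ u, IsGaussInt a) :
    FullSeq u ↔ ∀ w ∈ fund, Admissible u w := by
  rw [FullSeq, proto_eq hu]
  exact ⟨fun h w hw => (h ▸ hw : w ∈ {w | Admissible u w}),
    fun h => Set.Subset.antisymm (fun _ hw => Admissible.mem_fund hw) h⟩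

theorem FullSeq.append {u v : List ℂ} (hu : ∀ a ∈ u, IsGaussInt a) (hv : ∀ a ∈ v, IsGaussInt a)
    (hfu : FullSeq u) (hfv : FullSeq v) : FullSeq (u ++ v) := by
  rw [fullSeq_iff (List.forall_mem_append.2 ⟨hu, hv⟩)]
  rw [fullSeq_iff hu] at hfu
  rw [fullSeq_iff hv] at hfv
  exact fun w hw => admissible_append.2 ⟨hfu _ (hfv w hw).cfComp_mem_fund, hfv w hw⟩

lemma cylinder_append_subset {u v : List ℂ} (hu : ∀ a ∈ u, IsGaussInt a)
    (hv : ∀ a ∈ v, IsGaussInt a) : cylinder (u ++ v) ⊆ cfComp u '' cylinder v := by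
  rw [cylinder_eq_image (List.forall_mem_append.2 ⟨hu, hv⟩),
    cylinder_eq_image hv, Set.image_image]
  rintro _ ⟨w, hw, rfl⟩
  exact ⟨w, (admissible_append.1 hw).2, (cfComp_append u v w).symm⟩

lemma continuousOn_cfComp {u : List ℂ} (hu : ∀ a ∈ u, IsGaussInt a ∧ a ≠ 0) {S : Set ℂ}
    (hS : ∀ w ∈ S, Admissible u w) : ContinuousOn (cfComp u) S := by
  induction u with
  | nil => exact continuousOn_id
  | cons a u ih =>
    have ha := hu a List.mem_cons_self
    exact (continuousOn_const.add (ih (fun x hx => hu x (List.mem_cons_of_mem a hx))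
      fun w hw => (hS w hw).2)).inv₀
      fun w hw => add_ne_zero_of_mem_fund ha.1 ha.2 (hS w hw).2.cfComp_mem_fund

lemma isOpen_image_inv {S : Set ℂ} (hS : IsOpen S) (h0 : (0 : ℂ) ∉ S) :
    IsOpen ((·⁻¹) '' S) := by
  rw [Set.image_inv_eq_inv]
  have hsub : Inv.inv ⁻¹' S ⊆ {0}ᶜ := by
    rintro z hz rfl
    exact h0 (by simpa using hz)
  have := (continuousOn_inv₀ : ContinuousOn (Inv.inv : ℂ → ℂ) {0}ᶜ).isOpen_inter_preimage
    isOpen_compl_singleton hS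
  rwa [Set.inter_eq_right.2 hsub] at this

lemma isOpen_image_cfComp {u : List ℂ} (hu : ∀ a ∈ u, IsGaussInt a ∧ a ≠ 0) {S : Set ℂ}
    (hSo : IsOpen S) (hS : ∀ w ∈ S, Admissible u w) : IsOpen (cfComp u '' S) := by
  induction u with
  | nil => simpa [show cfComp [] = id from rfl] using hSo
  | cons a u ih =>
    have ha := hu a List.mem_cons_self
    have himg : cfComp (a :: u) '' S = (·⁻¹) '' ((a + ·) '' (cfComp u '' S)) := by
      rw [Set.image_image, Set.image_image]; rfl
    rw [himg]
    refine isOpen_image_inv ((Homeomorph.addLeft a).isOpenMap _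
      (ih (fun x hx => hu x (List.mem_cons_of_mem a hx)) fun w hw => (hS w hw).2)) ?_
    rintro ⟨_, ⟨w, hw, rfl⟩, h⟩
    exact add_ne_zero_of_mem_fund ha.1 ha.2 (hS w hw).2.cfComp_mem_fund h

theorem closure_cylinder_append_subset_interior {u v : List ℂ}
    (hu : ∀ a ∈ u, IsGaussInt a ∧ a ≠ 0) (hv : ∀ a ∈ v, IsGaussInt a) (hfu : FullSeq u)
    {K : Set ℂ} (hK : IsCompact K) (hKfund : K ⊆ interior fund) (hvK : cylinder v ⊆ K) :
    closure (cylinder (u ++ v)) ⊆ interior (cylinder u) := by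
  have hu' : ∀ a ∈ u, IsGaussInt a := fun a ha => (hu a ha).1
  have hadm : ∀ t ∈ fund, Admissible u t := (fullSeq_iff hu').1 hfu
  have hadm_int : ∀ t ∈ interior fund, Admissible u t := fun t ht => hadm t (interior_subset ht)
  have hcompact : IsCompact (cfComp u '' K) :=
    hK.image_of_continuousOn (continuousOn_cfComp hu fun t ht => hadm_int t (hKfund ht))
  have hopen : IsOpen (cfComp u '' interior fund) := isOpen_image_cfComp hu isOpen_interior hadm_int
  have hsub : cfComp u '' interior fund ⊆ cylinder u := by
    rw [cylinder_eq_image hu']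
    exact Set.image_mono hadm_int
  calc closure (cylinder (u ++ v))
      ⊆ cfComp u '' K :=
        closure_minimal ((cylinder_append_subset hu' hv).trans (Set.image_mono hvK))
          hcompact.isClosed
    _ ⊆ cfComp u '' interior fund := Set.image_mono hKfund
    _ ⊆ interior (cylinder u) := interior_maximal hsub hopen

/-- Inversion of a disk: `r2`, `r2'` are squared radii, and `κ > 0` says that `-a` lies outside
the disk around `c`. -/
lemma normSq_inv_add_sub_le {a c c' x : ℂ} {r2 r2' κ : ℝ} (hκ : κ = normSq (a + c) - r2)
    (hκ0 : 0 < κ) (hc' : c' * κ = conj (a + c)) (hr2' : r2' * κ ^ 2 = r2)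
    (hx : normSq (x - c) ≤ r2) : normSq ((a + x)⁻¹ - c') ≤ r2' := by
  have hax : a + x ≠ 0 := by
    intro h
    rw [show x - c = -(a + c) by linear_combination h, normSq_neg] at hx
    linarith
  have hκC : (κ : ℂ) ≠ 0 := by exact_mod_cast hκ0.ne'
  have hrepr : (a + x)⁻¹ - c' = (κ - conj (a + c) * (a + x)) / (κ * (a + x)) := by
    rw [← hc']
    field_simp
  have hnum : normSq ((κ : ℂ) - conj (a + c) * (a + x))
      = r2 * normSq (a + x) - κ * (r2 - normSq (x - c)) := by
    subst hκ
    simp only [normSq_apply, add_re, add_im, sub_re, sub_im, mul_re, mul_im, conj_re, conj_im,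
      ofReal_re, ofReal_im]
    ring
  have hpos : 0 < normSq (a + x) := normSq_pos.2 hax
  rw [hrepr, normSq_div, normSq_mul, normSq_ofReal, hnum, div_le_iff₀ (by positivity)]
  nlinarith [mul_nonneg hκ0.le (sub_nonneg.2 hx)]

lemma normSq_inv_add_I {ζ : ℂ} (hζ : ζ ≠ 0) :
    normSq (ζ⁻¹ + I) = 1 + (1 - 2 * ζ.im) / normSq ζ := by
  have hn : normSq ζ ≠ 0 := (normSq_pos.2 hζ).ne'
  rw [show ζ⁻¹ + I = (1 + I * ζ) / ζ by field_simp, normSq_div]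
  field_simp
  simp only [normSq_apply, add_re, add_im, mul_re, mul_im, one_re, one_im, I_re, I_im]
  ring

/-- Inversion exchanges the line `Im ζ = 1/2` with the circle `|ζ⁻¹ + i| = 1`. -/
lemma one_lt_normSq_inv_add_I_iff {ζ : ℂ} (hζ : ζ ≠ 0) :
    1 < normSq (ζ⁻¹ + I) ↔ ζ.im < 1/2 := by
  rw [normSq_inv_add_I hζ, lt_add_iff_pos_right, div_pos_iff_of_pos_right (normSq_pos.2 hζ)]
  constructor <;> intro h <;> linarith

lemma one_lt_normSq_inv_sub_I_iff {ζ : ℂ} (hζ : ζ ≠ 0) :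
    1 < normSq (ζ⁻¹ - I) ↔ -(1/2) < ζ.im := by
  have h := one_lt_normSq_inv_add_I_iff (neg_ne_zero.2 hζ)
  rw [inv_neg, show -ζ⁻¹ + I = -(ζ⁻¹ - I) by ring, normSq_neg, neg_im] at h
  rw [h]
  constructor <;> intro h <;> linarith

lemma sq_sub_le_of_normSq_sub_le {x c : ℂ} {r2 : ℝ} (h : normSq (x - c) ≤ r2) :
    (x.re - c.re) ^ 2 ≤ r2 ∧ (x.im - c.im) ^ 2 ≤ r2 := by
  rw [normSq_apply, sub_re, sub_im] at h
  constructor <;> nlinarith [sq_nonneg (x.re - c.re), sq_nonneg (x.im - c.im)]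

/-- The digits `-2i, -2, 2i, -2` of the block, applied in this order, map `R₀ → R₁ → R₂ → R₃ → R₀`;
each centre and squared radius is the image of the previous disk under `normSq_inv_add_sub_le`. -/
def R₀ : Set ℂ := {x | normSq x ≤ 2/9 ∧ 1 < normSq (x - I)}

def R₁ : Set ℂ := {x | normSq (x - ⟨0, 9/17⟩) ≤ 9/578 ∧ x.im < 1/2}

def R₂ : Set ℂ := {x | normSq (x - ⟨-68/145, -18/145⟩) ≤ 18/21025 ∧ 1 < normSq (x + I)}

def R₃ : Set ℂ := {x | normSq (x - ⟨-34/271, -136/271⟩) ≤ 9/146882 ∧ -(1/2) < x.im}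

lemma R₀_subset_fund : R₀ ⊆ fund := by
  rintro x ⟨hx, -⟩
  rw [normSq_apply] at hx
  rw [mem_fund_iff]
  refine ⟨⟨?_, ?_⟩, ?_, ?_⟩ <;> nlinarith [sq_nonneg x.re, sq_nonneg x.im]

lemma R₁_subset_fund : R₁ ⊆ fund := by
  rintro x ⟨hx, him⟩
  obtain ⟨hre', him'⟩ := sq_sub_le_of_normSq_sub_le hx
  rw [mem_fund_iff]
  refine ⟨⟨?_, ?_⟩, ?_, him⟩ <;> nlinarith

lemma R₂_subset_fund : R₂ ⊆ fund := by
  rintro x ⟨hx, -⟩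
  obtain ⟨hre', him'⟩ := sq_sub_le_of_normSq_sub_le hx
  rw [mem_fund_iff]
  refine ⟨⟨?_, ?_⟩, ?_, ?_⟩ <;> nlinarith

lemma R₃_subset_fund : R₃ ⊆ fund := by
  rintro x ⟨hx, him⟩
  obtain ⟨hre', him'⟩ := sq_sub_le_of_normSq_sub_le hx
  rw [mem_fund_iff]
  refine ⟨⟨?_, ?_⟩, by linarith, ?_⟩ <;> nlinarith

lemma mapsTo_R₀_R₁ : MapsTo (fun x => (-2 * I + x)⁻¹) R₀ R₁ := by
  rintro x ⟨hx, hxI⟩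
  dsimp only
  refine ⟨normSq_inv_add_sub_le (c := 0) (r2 := 2/9) (κ := 34/9) ?_ (by norm_num) ?_ (by norm_num)
    (by simpa using hx), ?_⟩
  · norm_num [normSq_apply]
  · norm_num [Complex.ext_iff]
  · by_cases hy : (-2 * I + x)⁻¹ = 0
    · rw [hy, zero_im]; norm_num
    · rw [← one_lt_normSq_inv_add_I_iff hy, inv_inv, show -2 * I + x + I = x - I by ring]
      exact hxI

lemma mapsTo_R₁_R₂ : MapsTo (fun x => (-2 + x)⁻¹) R₁ R₂ := by
  rintro x ⟨hx, him⟩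
  dsimp only
  have hne : -2 + x ≠ 0 := by
    intro h
    rw [show x = 2 by linear_combination h] at hx
    norm_num [normSq_apply] at hx
  refine ⟨normSq_inv_add_sub_le (r2 := 9/578) (κ := 145/34) ?_ (by norm_num) ?_ (by norm_num)
    hx, (one_lt_normSq_inv_add_I_iff hne).2 (by simpa using him)⟩
  · norm_num [normSq_apply]
  · norm_num [Complex.ext_iff]

lemma mapsTo_R₂_R₃ : MapsTo (fun x => (2 * I + x)⁻¹) R₂ R₃ := by
  rintro x ⟨hx, hxI⟩
  dsimp only
  refine ⟨normSq_inv_add_sub_le (r2 := 18/21025) (κ := 542/145) ?_ (by norm_num) ?_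
    (by norm_num) hx, ?_⟩
  · norm_num [normSq_apply]
  · norm_num [Complex.ext_iff]
  · by_cases hy : (2 * I + x)⁻¹ = 0
    · rw [hy, zero_im]; norm_num
    · rw [← one_lt_normSq_inv_sub_I_iff hy, inv_inv, show 2 * I + x - I = x + I by ring]
      exact hxI

lemma mapsTo_R₃_R₀ : MapsTo (fun x => (-2 + x)⁻¹) R₃ R₀ := by
  rintro x ⟨hx, him⟩
  dsimp only
  have hne : -2 + x ≠ 0 := by
    intro h
    rw [show x = 2 by linear_combination h] at hx
    norm_num [normSq_apply] at hx
  have hd : normSq ((-2 + x)⁻¹ - ⟨-1152/2585, 272/2585⟩) ≤ 18/6682225 :=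
    normSq_inv_add_sub_le (r2 := 9/146882) (κ := 2585/542) (by norm_num [normSq_apply])
      (by norm_num) (by norm_num [Complex.ext_iff]) (by norm_num) hx
  obtain ⟨hre, him'⟩ := sq_sub_le_of_normSq_sub_le hd
  have hδ : (18/6682225 : ℝ) ≤ (1/600) ^ 2 := by norm_num
  obtain ⟨hre₁, hre₂⟩ := abs_le_of_sq_le_sq' (hre.trans hδ) (by norm_num)
  obtain ⟨him₁, him₂⟩ := abs_le_of_sq_le_sq' (him'.trans hδ) (by norm_num)
  refine ⟨?_, (one_lt_normSq_inv_sub_I_iff hne).2 (by simpa using him)⟩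
  rw [normSq_apply]
  nlinarith [mul_nonneg (sub_nonneg.2 hre₁) (sub_nonneg.2 hre₂),
    mul_nonneg (sub_nonneg.2 him₁) (sub_nonneg.2 him₂)]

lemma mapsTo_R₁_closedBall :
    MapsTo (fun x => (3 + x)⁻¹) R₁ (Metric.closedBall ⟨34/105, -2/35⟩ (1/70)) := by
  rintro x ⟨hx, -⟩
  have hd : normSq ((3 + x)⁻¹ - ⟨34/105, -2/35⟩) ≤ 2/11025 :=
    normSq_inv_add_sub_le (r2 := 9/578) (κ := 315/34) (by norm_num [normSq_apply])
      (by norm_num) (by norm_num [Complex.ext_iff]) (by norm_num) hx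
  rw [Metric.mem_closedBall, dist_eq_norm]
  nlinarith [Complex.sq_norm ((3 + x)⁻¹ - ⟨34/105, -2/35⟩),
    norm_nonneg ((3 + x)⁻¹ - ⟨34/105, -2/35⟩)]

lemma closedBall_subset_interior_fund :
    Metric.closedBall (⟨34/105, -2/35⟩ : ℂ) (1/70) ⊆ interior fund := by
  refine (Metric.closedBall_subset_ball (by norm_num : (1/70 : ℝ) < 1/10)).trans
    (interior_maximal (fun z hz => ?_) Metric.isOpen_ball)
  rw [Metric.mem_ball, dist_eq_norm] at hz
  have hre := abs_lt.1 ((abs_re_le_norm _).trans_lt hz)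
  have him := abs_lt.1 ((abs_im_le_norm _).trans_lt hz)
  simp only [sub_re, sub_im] at hre him
  rw [mem_fund_iff]
  refine ⟨⟨?_, ?_⟩, ?_, ?_⟩ <;> linarith [hre.1, hre.2, him.1, him.2]

lemma inv_add_mem_R₀ {b w : ℂ} (hb : 2 * √2 ≤ ‖b‖) (hbim : 1 ≤ b.im) (hw : w ∈ fund) :
    (b + w)⁻¹ ∈ R₀ := by
  have hs : √2 ^ 2 = 2 := Real.sq_sqrt (by norm_num)
  have hw2 : ‖w‖ ^ 2 ≤ 1/2 := by
    rw [mem_fund_iff] at hw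
    rw [Complex.sq_norm, normSq_apply]
    nlinarith
  have hw' : ‖w‖ ≤ √2 / 2 := by nlinarith [norm_nonneg w, Real.sqrt_nonneg 2]
  have hbw : 3 * √2 / 2 ≤ ‖b + w‖ := by
    have := norm_sub_norm_le b (-w)
    rw [norm_neg, sub_neg_eq_add] at this
    linarith
  have hnorm : 9/2 ≤ normSq (b + w) := by
    rw [← Complex.sq_norm]
    nlinarith [Real.sqrt_nonneg 2]
  have hne : b + w ≠ 0 := fun h => by norm_num [h] at hnorm
  refine ⟨?_, (one_lt_normSq_inv_sub_I_iff hne).2 ?_⟩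
  · rw [normSq_inv]
    calc (normSq (b + w))⁻¹ ≤ (9/2)⁻¹ := inv_anti₀ (by norm_num) hnorm
      _ = 2/9 := by norm_num
  · rw [add_im]
    linarith [(mem_fund_iff.1 hw).2.1]

lemma admissible_block {x : ℂ} (hx : x ∈ R₀) :
    Admissible [-2, 2 * I, -2, -2 * I] x ∧ cfComp [-2, 2 * I, -2, -2 * I] x ∈ R₀ := by
  have h₁ := mapsTo_R₀_R₁ hx
  have h₂ := mapsTo_R₁_R₂ h₁
  have h₃ := mapsTo_R₂_R₃ h₂
  have h₄ := mapsTo_R₃_R₀ h₃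
  exact ⟨⟨R₀_subset_fund h₄, R₃_subset_fund h₃, R₂_subset_fund h₂, R₁_subset_fund h₁,
    R₀_subset_fund hx⟩, h₄⟩

lemma admissible_blocks (k : ℕ) {x : ℂ} (hx : x ∈ R₀) :
    Admissible (List.replicate k [-2, 2 * I, -2, -2 * I]).flatten x ∧
      cfComp (List.replicate k [-2, 2 * I, -2, -2 * I]).flatten x ∈ R₀ := by
  induction k with
  | zero => exact ⟨R₀_subset_fund hx, hx⟩
  | succ k ih =>
    obtain ⟨hadm, hmem⟩ := ih
    obtain ⟨hadm', hmem'⟩ := admissible_block hmem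
    rw [List.replicate_succ, List.flatten_cons, admissible_append, cfComp_append]
    exact ⟨⟨hadm', hadm⟩, hmem'⟩

lemma admissible_vSeq (k : ℕ) {x : ℂ} (hx : x ∈ R₀) :
    Admissible (vSeq k) x ∧ cfComp (vSeq k) x ∈ Metric.closedBall ⟨34/105, -2/35⟩ (1/70) := by
  obtain ⟨hadm, hmem⟩ := admissible_blocks k hx
  have h₁ := mapsTo_R₀_R₁ hmem
  have h₂ := mapsTo_R₁_closedBall h₁
  rw [vSeq, admissible_append, cfComp_append]
  exact ⟨⟨⟨interior_subset (closedBall_subset_interior_fund h₂), R₁_subset_fund h₁,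
    R₀_subset_fund hmem⟩, hadm⟩, h₂⟩

lemma admissible_vSeq_append {b w : ℂ} (hb : 2 * √2 ≤ ‖b‖) (hbim : 1 ≤ b.im) (k : ℕ)
    (hw : w ∈ fund) :
    Admissible (vSeq k ++ [b]) w ∧
      cfComp (vSeq k ++ [b]) w ∈ Metric.closedBall ⟨34/105, -2/35⟩ (1/70) := by
  have hx := inv_add_mem_R₀ hb hbim hw
  obtain ⟨hadm, hmem⟩ := admissible_vSeq k hx
  rw [admissible_append, cfComp_append]
  exact ⟨⟨hadm, R₀_subset_fund hx, hw⟩, hmem⟩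

lemma isGaussInt_of_mem_vSeq_append {b : ℂ} (hbG : IsGaussInt b) (k : ℕ) :
    ∀ x ∈ vSeq k ++ [b], IsGaussInt x := by
  have h3 : IsGaussInt 3 := ⟨3, 0, by simp⟩
  have h2 : IsGaussInt (-2) := ⟨-2, 0, by simp⟩
  have h2I : IsGaussInt (2 * I) := ⟨0, 2, by simp⟩
  have hm2I : IsGaussInt (-2 * I) := ⟨0, -2, by simp⟩
  intro x hx
  simp only [vSeq, List.mem_append, List.mem_cons, List.not_mem_nil, or_false, List.mem_flatten,
    List.mem_replicate] at hx
  rcases hx with ((rfl | rfl) | ⟨l, ⟨-, rfl⟩, hl⟩) | rfl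
  · exact h3
  · exact hm2I
  · simp only [List.mem_cons, List.not_mem_nil, or_false] at hl
    rcases hl with rfl | rfl | rfl | rfl <;> assumption
  · exact hbG

theorem fullSeq_vSeq_append {b : ℂ} (hbG : IsGaussInt b) (hb : 2 * √2 ≤ ‖b‖) (hbim : 1 ≤ b.im)
    (k : ℕ) : FullSeq (vSeq k ++ [b]) :=
  (fullSeq_iff (isGaussInt_of_mem_vSeq_append hbG k)).2
    fun _ hw => (admissible_vSeq_append hb hbim k hw).1

theorem cylinder_vSeq_append_subset {b : ℂ} (hbG : IsGaussInt b) (hb : 2 * √2 ≤ ‖b‖)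
    (hbim : 1 ≤ b.im) (k : ℕ) :
    cylinder (vSeq k ++ [b]) ⊆ Metric.closedBall ⟨34/105, -2/35⟩ (1/70) := by
  rw [cylinder_eq_image (isGaussInt_of_mem_vSeq_append hbG k)]
  rintro _ ⟨w, hw, rfl⟩
  exact (admissible_vSeq_append hb hbim k hw.mem_fund).2

end HurwitzCF

open HurwitzCF

theorem full_cylinder_a_vk_b (a : List ℂ) (ha : ∀ x ∈ a, x ∈ setI) (hfull : FullSeq a)
    (b : ℂ) (hbG : IsGaussInt b) (hb2 : 2 * Real.sqrt 2 ≤ ‖b‖) (hbim : 1 ≤ b.im)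
    (k : ℕ) :
    FullSeq (a ++ vSeq k ++ [b]) ∧
    closure (cylinder (a ++ vSeq k ++ [b])) ⊆ interior (cylinder a) := by
  have hadig : ∀ x ∈ a, IsGaussInt x ∧ x ≠ 0 := fun x hx =>
    ⟨(ha x hx).1, norm_pos_iff.1 ((Real.sqrt_pos.2 two_pos).trans_le (ha x hx).2)⟩
  have hvdig := isGaussInt_of_mem_vSeq_append hbG k
  rw [List.append_assoc]
  exact ⟨hfull.append (fun x hx => (hadig x hx).1) hvdig (fullSeq_vSeq_append hbG hb2 hbim k),
    closure_cylinder_append_subset_interior hadig hvdig hfull (isCompact_closedBall _ _)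
      closedBall_subset_interior_fund (cylinder_vSeq_append_subset hbG hb2 hbim k)⟩
end

section
/- Let a ∈ Iⁿ be a full sequence. Set p = p(a v_k) and q = q(a v_k), where a v_k is the concatenation of a and v_k. Then for every k ≥ 1, the Gaussian rational p/q lies in the cylinder C(a ṽ_k). -/
open Complex MeasureTheory Filter Set
open scoped ENNReal

/-!
Let `s₀ = 0` and `s_{k+1} = φ(φ(s_k))` with `φ(s) = 1/(4(s+2))`, so `0 ≤ s_k ≤ 1/8`. For `ε = ±1`,
`2εi + 1/(-(s+2) + εi/2) = 1/(-φ(s) - εi/2)`. Applied along the tail `(-2i, -2, 2i, -2, -2i, …)` of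
`v_k` it shows that this tail has convergent `-s_k + i/2`, a point of the upper edge of `𝔇`; applied
along the tail `(2i, -2+i, 2i, …)` of `ṽ_k` it shows that `-s_k - i/2`, on the lower edge, has this
tail as its Hurwitz expansion. As `3 + (-s_k + i/2) = (3+i) + (-s_k - i/2)`, the point
`w = p(v_k)/q(v_k)` lies in `C(ṽ_k)`. Since `a` is full, `w = T^n z` for some `z ∈ C(a)`, and then
`p(a v_k)/q(a v_k) = z ∈ C(a ṽ_k)`.
-/

lemma mem_fund_iff {z : ℂ} :
    z ∈ fund ↔ -(1/2 : ℝ) ≤ z.re ∧ z.re < 1/2 ∧ -(1/2 : ℝ) ≤ z.im ∧ z.im < 1/2 := by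
  simp only [fund, Set.mem_ofPred_eq, Set.mem_Ico, neg_div, and_assoc]

lemma mem_fund_of_norm_lt {z : ℂ} (hz : ‖z‖ < 1/2) : z ∈ fund := by
  have hre := abs_le.mp (abs_re_le_norm z)
  have him := abs_le.mp (abs_im_le_norm z)
  exact mem_fund_iff.mpr ⟨by linarith, by linarith, by linarith, by linarith⟩

lemma one_div_mem_fund {z : ℂ} (hz : 4 < normSq z) : 1 / z ∈ fund := by
  have h2 : 2 < ‖z‖ := by nlinarith [Complex.sq_norm z, norm_nonneg z]
  refine mem_fund_of_norm_lt ?_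
  rw [norm_div, norm_one, div_lt_iff₀ (by linarith)]
  linarith

lemma sub_nearestGauss_mem_fund (z : ℂ) : z - nearestGauss z ∈ fund := by
  have h1 := Int.floor_le (z.re + 1/2)
  have h2 := Int.lt_floor_add_one (z.re + 1/2)
  have h3 := Int.floor_le (z.im + 1/2)
  have h4 := Int.lt_floor_add_one (z.im + 1/2)
  refine mem_fund_iff.mpr ?_
  simp only [nearestGauss, sub_re, sub_im, add_re, add_im, mul_re, mul_im, intCast_re,
    intCast_im, I_re, I_im]
  refine ⟨by linarith, by linarith, by linarith, by linarith⟩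

lemma nearestGauss_add {g x : ℂ} (hg : IsGaussInt g) (hx : x ∈ fund) :
    nearestGauss (g + x) = g := by
  obtain ⟨a, b, rfl⟩ := hg
  obtain ⟨h1, h2, h3, h4⟩ := mem_fund_iff.mp hx
  have hre : ((a : ℂ) + b * I + x).re = a + x.re := by simp
  have him : ((a : ℂ) + b * I + x).im = b + x.im := by simp
  have ha : ⌊(a : ℝ) + x.re + 1/2⌋ = a := Int.floor_eq_iff.mpr ⟨by linarith, by linarith⟩
  have hb : ⌊(b : ℝ) + x.im + 1/2⌋ = b := Int.floor_eq_iff.mpr ⟨by linarith, by linarith⟩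
  rw [nearestGauss, hre, him, ha, hb]

lemma hT_zero : hT 0 = 0 := by
  norm_num [hT, nearestGauss, Int.floor_eq_zero_iff]

lemma hT_iterate_zero (n : ℕ) : hT^[n] 0 = 0 :=
  Function.iterate_fixed hT_zero n

lemma mem_cylinder_nil {z : ℂ} (hz : z ∈ fund) : z ∈ cylinder [] :=
  ⟨hz, fun j => j.elim0⟩

lemma mem_cylinder_cons_iff {b z : ℂ} {u : List ℂ} :
    z ∈ cylinder (b :: u) ↔ z ∈ fund ∧ nearestGauss (1 / z) = b ∧ hT z ∈ cylinder u := by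
  simp only [_root_.cylinder, Set.mem_ofPred_eq, List.length_cons, Fin.forall_fin_succ,
    Fin.val_zero, Fin.val_succ, List.get_eq_getElem, List.getElem_cons_zero,
    List.getElem_cons_succ, hA, Function.iterate_zero_apply, Function.iterate_succ_apply]
  have := sub_nearestGauss_mem_fund (1 / z)
  tauto

lemma one_div_mem_cylinder_cons {g x : ℂ} {u : List ℂ} (hg : IsGaussInt g)
    (hx : x ∈ cylinder u) (hfund : 1 / (g + x) ∈ fund) : 1 / (g + x) ∈ cylinder (g :: u) := by
  have hg' : nearestGauss (g + x) = g := nearestGauss_add hg hx.1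
  refine mem_cylinder_cons_iff.mpr ⟨hfund, by rwa [one_div_one_div], ?_⟩
  rwa [hT, one_div_one_div, hg', add_sub_cancel_left]

lemma mem_cylinder_append {u v : List ℂ} {z : ℂ} (hu : z ∈ cylinder u)
    (hv : hT^[u.length] z ∈ cylinder v) : z ∈ cylinder (u ++ v) := by
  induction u generalizing z with
  | nil => exact hv
  | cons b u ih =>
    obtain ⟨hz, hb, hTz⟩ := mem_cylinder_cons_iff.mp hu
    exact mem_cylinder_cons_iff.mpr ⟨hz, hb, ih hTz hv⟩

lemma cfMatrix_cons (b : ℂ) (u : List ℂ) : cfMatrix (b :: u) = !![0, 1; 1, b] * cfMatrix u := by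
  simp only [cfMatrix, List.map_cons, List.prod_cons, ← Matrix.mul_assoc]
  congr 1
  ext i j
  fin_cases i <;> fin_cases j <;> simp [Matrix.mul_apply, Fin.sum_univ_two]

lemma contP_cons (b : ℂ) (u : List ℂ) : contP (b :: u) = contQ u := by
  simp [contP, contQ, cfMatrix_cons, Matrix.mul_apply, Fin.sum_univ_two]

lemma contQ_cons (b : ℂ) (u : List ℂ) : contQ (b :: u) = contP u + b * contQ u := by
  simp [contP, contQ, cfMatrix_cons, Matrix.mul_apply, Fin.sum_univ_two]

def HasConvergent (u : List ℂ) (x : ℂ) : Prop := contQ u ≠ 0 ∧ contP u / contQ u = x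

lemma hasConvergent_nil : HasConvergent [] 0 := by
  simp [HasConvergent, contP, contQ, cfMatrix]

lemma HasConvergent.cons {u : List ℂ} {b x : ℂ} (h : HasConvergent u x) (hx : b + x ≠ 0) :
    HasConvergent (b :: u) (1 / (b + x)) := by
  obtain ⟨hq, rfl⟩ := h
  have hQ : contQ (b :: u) = contQ u * (b + contP u / contQ u) := by
    rw [contQ_cons]; field_simp; ring
  refine ⟨hQ ▸ mul_ne_zero hq hx, ?_⟩
  rw [contP_cons, hQ, div_mul_cancel_left₀ hq, one_div]

lemma HasConvergent.of_mem_cylinder {u v : List ℂ} {z : ℂ} (hz : z ∈ cylinder u)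
    (hw : hT^[u.length] z ≠ 0) (hv : HasConvergent v (hT^[u.length] z)) :
    HasConvergent (u ++ v) z := by
  induction u generalizing z with
  | nil => exact hv
  | cons b u ih =>
    obtain ⟨-, hb, hTz⟩ := mem_cylinder_cons_iff.mp hz
    rw [List.length_cons, Function.iterate_succ_apply] at hw hv
    have hz0 : z ≠ 0 := by
      rintro rfl
      exact hw (by rw [hT_zero, hT_iterate_zero])
    have hsum : b + hT z = 1 / z := by rw [hT, hb, add_sub_cancel]
    have h := (ih hTz hw hv).cons (b := b) (hsum ▸ one_div_ne_zero hz0)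
    rwa [hsum, one_div_one_div] at h

noncomputable def tailStep (s : ℝ) : ℝ := 1 / (4 * (s + 2))

noncomputable def tailParam : ℕ → ℝ
  | 0 => 0
  | k + 1 => tailStep (tailStep (tailParam k))

lemma tailStep_nonneg {s : ℝ} (hs : 0 ≤ s) : 0 ≤ tailStep s := by
  unfold tailStep; positivity

lemma tailStep_le {s : ℝ} (hs : 0 ≤ s) : tailStep s ≤ 1 / 8 := by
  unfold tailStep
  gcongr
  linarith

lemma tailParam_nonneg (k : ℕ) : 0 ≤ tailParam k := by
  cases k with
  | zero => exact le_rfl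
  | succ k => exact tailStep_nonneg (tailStep_nonneg (tailParam_nonneg k))

lemma tailParam_le (k : ℕ) : tailParam k ≤ 1 / 8 := by
  cases k with
  | zero => norm_num [tailParam]
  | succ k => exact tailStep_le (tailStep_nonneg (tailParam_nonneg k))

noncomputable def edgePoint (s ε : ℝ) : ℂ := ⟨-s, ε / 2⟩

@[simp] lemma edgePoint_re (s ε : ℝ) : (edgePoint s ε).re = -s := rfl

@[simp] lemma edgePoint_im (s ε : ℝ) : (edgePoint s ε).im = ε / 2 := rfl

lemma edgePoint_eq (s ε : ℝ) : edgePoint s ε = -s + ε / 2 * I := by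
  apply Complex.ext <;> simp

lemma edgePoint_ne_zero (s : ℝ) {ε : ℝ} (hε : ε ≠ 0) : edgePoint s ε ≠ 0 := by
  intro h
  have := congrArg Complex.im h
  simp [hε] at this

lemma normSq_edgePoint (s ε : ℝ) : normSq (edgePoint s ε) = s ^ 2 + (ε / 2) ^ 2 := by
  rw [normSq_apply, edgePoint_re, edgePoint_im]; ring

lemma edgePoint_mem_fund {s : ℝ} (hs0 : 0 ≤ s) (hs : s < 1 / 2) : edgePoint s (-1) ∈ fund := by
  refine mem_fund_iff.mpr ⟨?_, ?_, by norm_num, by norm_num⟩ <;> rw [edgePoint_re] <;> linarith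

lemma two_mul_I_add_one_div_edgePoint {s ε : ℝ} (hs : 0 ≤ s) (hε : ε = 1 ∨ ε = -1) :
    2 * ε * I + 1 / edgePoint (s + 2) ε = 1 / edgePoint (tailStep s) (-ε) := by
  have hε0 : ε ≠ 0 := by rcases hε with rfl | rfl <;> norm_num
  have h1 := edgePoint_ne_zero (s + 2) hε0
  have h2 := edgePoint_ne_zero (tailStep s) (neg_ne_zero.mpr hε0)
  have hs2 : (s : ℂ) + 2 ≠ 0 := by exact_mod_cast (by linarith : s + 2 ≠ 0)
  rw [add_div' _ _ _ h1, div_eq_div_iff h1 h2]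
  simp only [edgePoint_eq, tailStep]
  push_cast
  field_simp
  rcases hε with rfl | rfl
  all_goals apply Complex.ext <;> norm_num <;> ring

lemma HasConvergent.edgePoint_step {u : List ℂ} {s ε : ℝ} {c : ℂ}
    (h : HasConvergent u (edgePoint s ε)) (hs : 0 ≤ s) (hε : ε = 1 ∨ ε = -1)
    (hc : c = 2 * ε * I) : HasConvergent (c :: -2 :: u) (edgePoint (tailStep s) (-ε)) := by
  subst hc
  have hε0 : ε ≠ 0 := by rcases hε with rfl | rfl <;> norm_num
  have hshift : -2 + edgePoint s ε = edgePoint (s + 2) ε := by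
    apply Complex.ext <;> norm_num
  have key := two_mul_I_add_one_div_edgePoint hs hε
  have h2 := h.cons (b := -2) (hshift ▸ edgePoint_ne_zero _ hε0)
  rw [hshift] at h2
  have h3 := h2.cons (b := 2 * ε * I) (by
    rw [key]; exact one_div_ne_zero (edgePoint_ne_zero _ (neg_ne_zero.mpr hε0)))
  rwa [key, one_div_one_div] at h3

lemma edgePoint_mem_cylinder_step {u : List ℂ} {s : ℝ} (h : edgePoint s (-1) ∈ cylinder u)
    (hs : 0 ≤ s) : edgePoint (tailStep s) (-1) ∈ cylinder (2 * I :: (-2 + I) :: u) := by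
  have hshift : (-2 + I) + edgePoint s (-1) = edgePoint (s + 2) 1 := by
    apply Complex.ext <;> norm_num
  have key : 2 * I + 1 / edgePoint (s + 2) 1 = 1 / edgePoint (tailStep s) (-1) := by
    simpa using two_mul_I_add_one_div_edgePoint hs (Or.inl rfl)
  have h2 := one_div_mem_cylinder_cons (g := -2 + I) ⟨-2, 1, by push_cast; ring⟩ h (by
    rw [hshift]
    exact one_div_mem_fund (by rw [normSq_edgePoint]; nlinarith))
  rw [hshift] at h2
  have h3 := one_div_mem_cylinder_cons (g := 2 * I) ⟨0, 2, by push_cast; ring⟩ h2 (by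
    rw [key, one_div_one_div]
    exact edgePoint_mem_fund (tailStep_nonneg hs) (by linarith [tailStep_le hs]))
  rwa [key, one_div_one_div] at h3

lemma hasConvergent_vSeq_tail (k : ℕ) :
    HasConvergent (-2 * I :: (List.replicate k [-2, 2 * I, -2, -2 * I]).flatten)
      (edgePoint (tailParam k) 1) := by
  induction k with
  | zero =>
    have hw : edgePoint (tailParam 0) 1 = 1 / (-2 * I + 0) := by
      apply Complex.ext <;> norm_num [tailParam]
    rw [hw]
    exact hasConvergent_nil.cons (by simp)
  | succ k ih =>
    have hs := tailParam_nonneg k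
    have h := (ih.edgePoint_step hs (Or.inl rfl) (c := 2 * I) (by simp)).edgePoint_step
      (tailStep_nonneg hs) (Or.inr rfl) (c := -2 * I) (by push_cast; ring)
    rw [neg_neg] at h
    simpa [List.replicate_succ, tailParam] using h

lemma edgePoint_mem_cylinder_vtSeq_tail (k : ℕ) :
    edgePoint (tailParam k) (-1) ∈
      cylinder (2 * I :: (List.replicate k [-2 + I, 2 * I, -2 + I, 2 * I]).flatten) := by
  induction k with
  | zero =>
    have hw : edgePoint (tailParam 0) (-1) = 1 / (2 * I + 0) := by
      apply Complex.ext <;> norm_num [tailParam]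
    rw [hw]
    exact one_div_mem_cylinder_cons ⟨0, 2, by push_cast; ring⟩
      (mem_cylinder_nil (mem_fund_of_norm_lt (by simp)))
      (hw ▸ edgePoint_mem_fund le_rfl (by norm_num [tailParam]))
  | succ k ih =>
    have hs := tailParam_nonneg k
    have h := edgePoint_mem_cylinder_step (edgePoint_mem_cylinder_step ih hs) (tailStep_nonneg hs)
    simpa [List.replicate_succ, tailParam] using h

lemma hasConvergent_vSeq (k : ℕ) :
    HasConvergent (vSeq k) (1 / edgePoint (tailParam k - 3) 1) := by
  have hshift : 3 + edgePoint (tailParam k) 1 = edgePoint (tailParam k - 3) 1 := by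
    apply Complex.ext <;> norm_num; ring
  have h := (hasConvergent_vSeq_tail k).cons (b := 3) (hshift ▸ edgePoint_ne_zero _ one_ne_zero)
  rwa [hshift] at h

lemma one_div_edgePoint_mem_cylinder_vtSeq (k : ℕ) :
    1 / edgePoint (tailParam k - 3) 1 ∈ cylinder (vtSeq k) := by
  have hshift : (3 + I) + edgePoint (tailParam k) (-1) = edgePoint (tailParam k - 3) 1 := by
    apply Complex.ext <;> norm_num; ring
  have hfund : 1 / edgePoint (tailParam k - 3) 1 ∈ fund := by
    refine one_div_mem_fund ?_
    rw [normSq_edgePoint]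
    nlinarith [tailParam_le k, tailParam_nonneg k]
  have h := one_div_mem_cylinder_cons (g := 3 + I) ⟨3, 1, by push_cast; ring⟩
    (edgePoint_mem_cylinder_vtSeq_tail k) (hshift ▸ hfund)
  rwa [hshift] at h

theorem rat_mem_cylinder_vtSeq_general (a : List ℂ) (hfull : FullSeq a)
    (k : ℕ) :
    contP (a ++ vSeq k) / contQ (a ++ vSeq k) ∈ cylinder (a ++ vtSeq k) := by
  have hw := one_div_edgePoint_mem_cylinder_vtSeq k
  obtain ⟨z, hz, hzw⟩ : 1 / edgePoint (tailParam k - 3) 1 ∈ proto a := hfull ▸ hw.1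
  have hw0 : hT^[a.length] z ≠ 0 := hzw ▸ one_div_ne_zero (edgePoint_ne_zero _ one_ne_zero)
  rw [(HasConvergent.of_mem_cylinder hz hw0 (hzw ▸ hasConvergent_vSeq k)).2]
  exact mem_cylinder_append hz (hzw ▸ hw)

theorem rat_mem_cylinder_vtSeq (a : List ℂ) (ha : ∀ x ∈ a, x ∈ setI) (hfull : FullSeq a)
    (k : ℕ) (hk : 1 ≤ k) :
    contP (a ++ vSeq k) / contQ (a ++ vSeq k) ∈ cylinder (a ++ vtSeq k) :=
  rat_mem_cylinder_vtSeq_general a hfull k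
end
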